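/- arXiv:2208.07341 — 2 statements merged into one kernel-verified Lean document; each statement's English description precedes it below -/
import Mathlib

section
/- In the reduction from partition to the auxiliary assortment problem: given positive integers α_1,...,α_n with total 2L, set w_i = α_i/L and c'_i = α_i/(4L). Then for any S ⊆ [n], the objective (Σ_{i∈S} w_i)/(1 + Σ_{i∈S} w_i) − Σ_{i∈S} c'_i equals f(A(S)) where A(S) = Σ_{i∈S} α_i and f(x) = (3Lx − x²)/(4L² + 4Lx). Consequently, a subset S with |S| ≤ n/2 and A(S) = L exists if and only if the maximum of this objective over sets of size at most n/2 equals 1/4. -/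
/-!
Writing `x = A(S)`, the objective is `x / (L + x) - x / (4L)`, which simplifies to
`f x = (3Lx - x²) / (4L² + 4Lx)`. Since `1/4 - f x = (x - L)² / (4L(L + x))`, on `x ≥ 0` the
function `f` is bounded by `1/4` with equality exactly at `x = L`. The supremum is over a finite
nonempty family, so it is attained, and it equals `1/4` iff some admissible `S` has `A(S) = L`.
-/

theorem ciSup_eq_iff_exists_eq {ι α : Type*} [Finite ι] [Nonempty ι]
    [ConditionallyCompleteLinearOrder α] {g : ι → α} {m : α} (hg : ∀ i, g i ≤ m) :
    (⨆ i, g i) = m ↔ ∃ i, g i = m := by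
  constructor
  · intro hsup
    obtain ⟨i, hi⟩ := exists_eq_ciSup_of_finite (f := g)
    exact ⟨i, hi.trans hsup⟩
  · rintro ⟨i, rfl⟩
    exact le_antisymm (ciSup_le hg) (le_ciSup (Set.finite_range g).bddAbove i)

namespace PartitionReduction

variable {L x : ℝ}

noncomputable def profit (L x : ℝ) : ℝ := (3 * L * x - x ^ 2) / (4 * L ^ 2 + 4 * L * x)

theorem div_div_one_add_sub_eq_profit (hL : L ≠ 0) (hLx : L + x ≠ 0) :
    x / L / (1 + x / L) - x / (4 * L) = profit L x := by
  unfold profit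
  field_simp
  ring

theorem profit_le (hL : 0 < L) (hx : 0 ≤ x) : profit L x ≤ 1 / 4 := by
  rw [profit, div_le_div_iff₀ (by positivity) (by norm_num)]
  nlinarith [sq_nonneg (x - L)]

theorem profit_eq_quarter_iff (hL : 0 < L) (hx : 0 ≤ x) : profit L x = 1 / 4 ↔ x = L := by
  rw [profit, div_eq_div_iff (by positivity) (by norm_num)]
  constructor
  · intro h
    nlinarith [sq_nonneg (x - L)]
  · rintro rfl
    ring

end PartitionReduction

open PartitionReduction in
theorem partition_reduction_general (n : ℕ) (α : Fin n → ℕ)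
    (L : ℝ) (hL : 0 < L) :
    let w : Fin n → ℝ := fun i => (α i : ℝ) / L
    let c : Fin n → ℝ := fun i => (α i : ℝ) / (4 * L)
    let A : Finset (Fin n) → ℝ := fun S => ∑ i ∈ S, (α i : ℝ)
    let f : ℝ → ℝ := fun x => (3 * L * x - x ^ 2) / (4 * L ^ 2 + 4 * L * x)
    let obj : Finset (Fin n) → ℝ :=
      fun S => (∑ i ∈ S, w i) / (1 + ∑ i ∈ S, w i) - ∑ i ∈ S, c i
    (∀ S : Finset (Fin n), obj S = f (A S)) ∧
    ((∃ S : Finset (Fin n), S.card ≤ n / 2 ∧ A S = L) ↔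
      (⨆ S : {S : Finset (Fin n) // S.card ≤ n / 2}, obj S.1) = 1 / 4) := by
  intro w c A f obj
  have hA : ∀ S, 0 ≤ A S := fun S => Finset.sum_nonneg fun i _ => Nat.cast_nonneg _
  have hobj : ∀ S, obj S = profit L (A S) := fun S => by
    simp only [obj, w, c, ← Finset.sum_div]
    exact div_div_one_add_sub_eq_profit hL.ne' (by linarith [hA S])
  refine ⟨hobj, ?_⟩
  have : Nonempty {S : Finset (Fin n) // S.card ≤ n / 2} := ⟨⟨∅, by simp⟩⟩
  rw [ciSup_eq_iff_exists_eq (g := fun S : {S : Finset (Fin n) // S.card ≤ n / 2} => obj S.1)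
    fun S => (hobj S.1).trans_le (profit_le hL (hA _))]
  simp only [hobj, profit_eq_quarter_iff hL (hA _), Subtype.exists, exists_prop]

/-- Reduction from partition to the auxiliary assortment problem:
with w_i = α_i/L, c'_i = α_i/(4L), the objective equals f(A(S)); and a subset of
size ≤ n/2 with A(S) = L exists iff the maximum of the objective over sets of
size ≤ n/2 equals 1/4. -/
theorem partition_reduction (n : ℕ) (hn : 0 < n) (α : Fin n → ℕ)
    (hα : ∀ i, 0 < α i) (L : ℝ) (hL : 0 < L)
    (hsum : (∑ i, (α i : ℝ)) = 2 * L) :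
    let w : Fin n → ℝ := fun i => (α i : ℝ) / L
    let c : Fin n → ℝ := fun i => (α i : ℝ) / (4 * L)
    let A : Finset (Fin n) → ℝ := fun S => ∑ i ∈ S, (α i : ℝ)
    let f : ℝ → ℝ := fun x => (3 * L * x - x ^ 2) / (4 * L ^ 2 + 4 * L * x)
    let obj : Finset (Fin n) → ℝ :=
      fun S => (∑ i ∈ S, w i) / (1 + ∑ i ∈ S, w i) - ∑ i ∈ S, c i
    (∀ S : Finset (Fin n), obj S = f (A S)) ∧
    ((∃ S : Finset (Fin n), S.card ≤ n / 2 ∧ A S = L) ↔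
      (⨆ S : {S : Finset (Fin n) // S.card ≤ n / 2}, obj S.1) = 1 / 4) :=
  partition_reduction_general n α L hL
end

section
/- Combined PTAS bound: for an integer ℓ ≥ 1 and nonnegative reals OPT, A, B* with A + B* = OPT, and a candidate value C satisfying both C ≥ B*/2 and C ≥ B* − m where m ≥ 0 satisfies ℓ·m ≤ A, it holds that A + C ≥ ((ℓ+1)/(ℓ+2))·OPT. -/
/-- Combined PTAS bound. -/
theorem ptas_combined (ℓ : ℕ) (hℓ : 1 ≤ ℓ) (OPT A B C m : ℝ)
    (hA : 0 ≤ A) (hB : 0 ≤ B) (hC : 0 ≤ C) (hm : 0 ≤ m)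
    (hsum : A + B = OPT) (hC1 : B / 2 ≤ C) (hC2 : B - m ≤ C)
    (hℓm : (ℓ : ℝ) * m ≤ A) :
    (((ℓ : ℝ) + 1) / ((ℓ : ℝ) + 2)) * OPT ≤ A + C := by
  have hl : (1 : ℝ) ≤ (ℓ : ℝ) := by exact_mod_cast hℓ
  have h2 : (0 : ℝ) < (ℓ : ℝ) + 2 := by linarith
  rw [div_mul_eq_mul_div, div_le_iff₀ h2]
  rcases le_or_gt ((ℓ : ℝ) / ((ℓ : ℝ) + 2) * OPT) A with h | h
  · nlinarith
  · rw [div_mul_eq_mul_div, lt_div_iff₀ h2] at h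
    nlinarith
end
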